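/- arXiv:2504.21315 — 2 statements merged into one kernel-verified Lean document; each statement's English description precedes it below -/
import Mathlib

section
/- For every row vector R ∈ ℂ^{1×2} and every real phase φ, the jump matrix V(R,φ) is a positive-definite Hermitian matrix: for every nonzero vector v ∈ ℂ³ the quadratic form vᴴ V(R,φ) v is real and strictly positive. (In fact V(R,φ) = A Aᴴ with the invertible matrix A = [[1, −e^{−iφ}R],[0, I₂]].) -/
open Matrix

/-- The jump matrix of the Riemann–Hilbert problem for the focusing coupled
nonlinear Schrödinger equation. -/
noncomputable def jumpV (R : Matrix (Fin 1) (Fin 2) ℂ) (φ : ℝ) :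
    Matrix (Fin 1 ⊕ Fin 2) (Fin 1 ⊕ Fin 2) ℂ :=
  Matrix.fromBlocks (1 + R * Rᴴ)
    ((-Complex.exp (-(φ : ℂ) * Complex.I)) • R)
    ((-Complex.exp ((φ : ℂ) * Complex.I)) • Rᴴ)
    (1 : Matrix (Fin 2) (Fin 2) ℂ)

/-!
Since `|e^{-iφ}| = 1`, the jump matrix factors as `V = A Aᴴ` with the block unipotent matrix
`A = [[1, -e^{-iφ} R], [0, I₂]]`; as `A` is invertible, `V` is positive definite.
-/

open scoped ComplexOrder

namespace Matrix

variable {m n α : Type*} [Fintype m] [Fintype n] [DecidableEq m] [DecidableEq n]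

theorem fromBlocks_one_zero_one_mul_conjTranspose [Semiring α] [StarRing α] (B : Matrix m n α) :
    fromBlocks 1 B 0 1 * (fromBlocks 1 B 0 1)ᴴ =
      fromBlocks (1 + B * Bᴴ) B Bᴴ 1 := by
  simp [fromBlocks_conjTranspose, fromBlocks_multiply]

theorem isUnit_fromBlocks_one_zero_one [CommRing α] (B : Matrix m n α) :
    IsUnit (fromBlocks 1 B 0 1 : Matrix (m ⊕ n) (m ⊕ n) α) := by
  simp [isUnit_iff_isUnit_det]

theorem posDef_fromBlocks_one_add_mul_conjTranspose {𝕜 : Type*} [RCLike 𝕜]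
    (B : Matrix m n 𝕜) :
    (fromBlocks (1 + B * Bᴴ) B Bᴴ 1).PosDef := by
  rw [← fromBlocks_one_zero_one_mul_conjTranspose]
  exact .mul_conjTranspose_self _
    (vecMul_injective_iff_isUnit.2 (isUnit_fromBlocks_one_zero_one B))

end Matrix

theorem jumpV_eq_fromBlocks (R : Matrix (Fin 1) (Fin 2) ℂ) (φ : ℝ) :
    jumpV R φ = fromBlocks
      (1 + (-Complex.exp (-(φ : ℂ) * Complex.I)) • R *
        ((-Complex.exp (-(φ : ℂ) * Complex.I)) • R)ᴴ)
      ((-Complex.exp (-(φ : ℂ) * Complex.I)) • R)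
      ((-Complex.exp (-(φ : ℂ) * Complex.I)) • R)ᴴ 1 := by
  have hstar :
      star (-Complex.exp (-(φ : ℂ) * Complex.I)) = -Complex.exp ((φ : ℂ) * Complex.I) := by
    rw [star_neg, Complex.star_def, ← Complex.exp_conj]
    simp [Complex.conj_I]
  have hunit :
      (-Complex.exp (-(φ : ℂ) * Complex.I)) * -Complex.exp ((φ : ℂ) * Complex.I) = 1 := by
    rw [neg_mul_neg, ← Complex.exp_add]; simp
  rw [jumpV, conjTranspose_smul, hstar, Matrix.smul_mul, Matrix.mul_smul, smul_smul, hunit,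
    one_smul]

/-- For every row vector `R ∈ ℂ^{1×2}` and every real phase `φ`, the jump
matrix `V(R,φ)` is a positive-definite Hermitian matrix: it is Hermitian and
for every nonzero vector `v ∈ ℂ³` the quadratic form `vᴴ V(R,φ) v` is real
and strictly positive. -/
theorem jumpV_posDef (R : Matrix (Fin 1) (Fin 2) ℂ) (φ : ℝ) :
    (jumpV R φ).IsHermitian ∧
      ∀ v : Fin 1 ⊕ Fin 2 → ℂ, v ≠ 0 →
        ∃ r : ℝ, 0 < r ∧ star v ⬝ᵥ (jumpV R φ) *ᵥ v = (r : ℂ) := by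
  have hV : (jumpV R φ).PosDef := by
    rw [jumpV_eq_fromBlocks]
    exact posDef_fromBlocks_one_add_mul_conjTranspose _
  refine ⟨hV.isHermitian, fun v hv => ?_⟩
  obtain ⟨r, hr, hrv⟩ := RCLike.pos_iff_exists_ofReal.1 (hV.dotProduct_mulVec_pos hv)
  exact ⟨r, hr, hrv.symm⟩
end

section
/- Let V : ℝ → M₃(ℂ) be continuous with V(x)ᴴ = V(x) for every x ∈ ℝ. Suppose M₊ is a matrix-valued function continuous on the closed upper half-plane {λ : Im λ ≥ 0} and holomorphic on the open upper half-plane, M₋ is continuous on the closed lower half-plane {λ : Im λ ≤ 0} and holomorphic on the open lower half-plane, M₊(x) = M₋(x)·V(x) for every x ∈ ℝ, and M₊(λ) → I₃ and M₋(λ) → I₃ as |λ| → ∞ within their respective half-planes. Then M₊(λ)·(M₋(conj(λ)))ᴴ = I₃ for every λ with Im λ ≥ 0 (and hence M₋(λ)·(M₊(conj(λ)))ᴴ = I₃ for Im λ ≤ 0). -/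
/-!
Put `H(λ) = M₊(λ) M₋(λ̄)ᴴ` on the closed upper half-plane and `H(λ) = M₋(λ) M₊(λ̄)ᴴ` on the
open lower one. On ℝ the jump relation and `Vᴴ = V` give `M₊ M₋ᴴ = M₋ V M₋ᴴ = M₋ M₊ᴴ`, so `H` is
continuous on ℂ and holomorphic off ℝ. Splitting any rectangle along ℝ shows that its boundary
integrals vanish, so `H` is entire by Morera's theorem; it tends to `I` at infinity, hence
`H ≡ I` by Liouville's theorem.
-/

open Matrix Filter Complex ComplexConjugate Set Topology intervalIntegral

namespace Complex

variable {E : Type*} [NormedAddCommGroup E] [NormedSpace ℂ E]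

lemma wedgeIntegral_add_wedgeIntegral_eq_add_ofReal {f : ℂ → E} (hf : Continuous f) (z w : ℂ) :
    wedgeIntegral z w f + wedgeIntegral w z f =
      (wedgeIntegral z w.re f + wedgeIntegral w.re z f) +
        (wedgeIntegral z.re w f + wedgeIntegral w z.re f) := by
  have hvert (a : ℝ) :
      (∫ y : ℝ in z.im..0, f (a + y * I)) + (∫ y : ℝ in 0..w.im, f (a + y * I)) =
        ∫ y : ℝ in z.im..w.im, f (a + y * I) :=
    have hc : Continuous fun y : ℝ => f (a + y * I) := hf.comp (by fun_prop)
    integral_add_adjacent_intervals (hc.intervalIntegrable _ _) (hc.intervalIntegrable _ _)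
  simp only [wedgeIntegral_add_wedgeIntegral_eq, ofReal_re, ofReal_im, ← hvert, smul_add]
  abel

lemma wedgeIntegral_add_wedgeIntegral_ofReal_eq_zero {f : ℂ → E} (hf : Continuous f)
    (hd : ∀ z : ℂ, z.im ≠ 0 → DifferentiableAt ℂ f z) (z : ℂ) (x : ℝ) :
    wedgeIntegral z x f + wedgeIntegral x z f = 0 := by
  rw [wedgeIntegral_add_wedgeIntegral_eq]
  refine integral_boundary_rect_eq_zero_of_continuousOn_of_differentiableOn f z x
    hf.continuousOn fun p hp => (hd p ?_).differentiableWithinAt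
  have him := (mem_reProdIm.1 hp).2
  rw [ofReal_im, mem_Ioo] at him
  rcases le_total z.im 0 with h | h
  · rw [min_eq_left h, max_eq_right h] at him; exact him.2.ne
  · rw [min_eq_right h, max_eq_left h] at him; exact him.1.ne'

theorem differentiable_of_differentiableAt_of_im_ne_zero [CompleteSpace E] {f : ℂ → E}
    (hf : Continuous f) (hd : ∀ z : ℂ, z.im ≠ 0 → DifferentiableAt ℂ f z) : Differentiable ℂ f := by
  have hcons : IsConservativeOn f univ := fun z w _ => by
    rw [← add_eq_zero_iff_eq_neg, wedgeIntegral_add_wedgeIntegral_eq_add_ofReal hf,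
      wedgeIntegral_add_wedgeIntegral_ofReal_eq_zero hf hd, add_comm (wedgeIntegral _ w f),
      wedgeIntegral_add_wedgeIntegral_ofReal_eq_zero hf hd, add_zero]
  exact differentiableOn_univ.1
    ((isConservativeOn_and_continuousOn_iff_isDifferentiableOn isOpen_univ).1
      ⟨hcons, hf.continuousOn⟩)

end Complex

variable {ι : Type*} [Fintype ι]

lemma differentiableAt_mul_conjTranspose_comp_conj_apply {A B : ℂ → Matrix ι ι ℂ}
    {s t : Set ℂ} (hs : IsOpen s) (ht : IsOpen t)
    (hA : ∀ i j, DifferentiableOn ℂ (fun w => A w i j) s)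
    (hB : ∀ i j, DifferentiableOn ℂ (fun w => B w i j) t) {z : ℂ} (hzs : z ∈ s)
    (hzt : conj z ∈ t) (i j : ι) :
    DifferentiableAt ℂ (fun w => (A w * (B (conj w))ᴴ) i j) z := by
  simp only [mul_apply, conjTranspose_apply, star_def]
  refine DifferentiableAt.fun_sum fun k _ => ((hA i k).differentiableAt (hs.mem_nhds hzs)).mul ?_
  simpa [Function.comp_def] using ((hB j k).differentiableAt (ht.mem_nhds hzt)).conj_conj

lemma continuousOn_mul_conjTranspose_comp_conj {A B : ℂ → Matrix ι ι ℂ} {s t : Set ℂ}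
    (hA : ContinuousOn A s) (hB : ContinuousOn B t) (hst : MapsTo conj s t) :
    ContinuousOn (fun w => A w * (B (conj w))ᴴ) s :=
  hA.mul (continuous_id.matrix_conjTranspose.comp_continuousOn
    (hB.comp continuous_conj.continuousOn hst))

lemma tendsto_mul_conjTranspose_comp_conj {A B : ℂ → Matrix ι ι ℂ} {s t : Set ℂ}
    {a b : Matrix ι ι ℂ} (hA : Tendsto A (cocompact ℂ ⊓ 𝓟 s) (𝓝 a))
    (hB : Tendsto B (cocompact ℂ ⊓ 𝓟 t) (𝓝 b)) (hst : MapsTo conj s t) :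
    Tendsto (fun w => A w * (B (conj w))ᴴ) (cocompact ℂ ⊓ 𝓟 s) (𝓝 (a * bᴴ)) := by
  have hconj : Tendsto conj (cocompact ℂ ⊓ 𝓟 s) (cocompact ℂ ⊓ 𝓟 t) :=
    Tendsto.inf conjCLE.toHomeomorph.map_cocompact.le (tendsto_principal_principal.2 hst)
  exact hA.mul ((continuous_id.matrix_conjTranspose.tendsto b).comp (hB.comp hconj))

theorem mul_conjTranspose_comp_conj_eq_one [DecidableEq ι] {Mp Mm : ℂ → Matrix ι ι ℂ}
    (hMpcont : ContinuousOn Mp {z | 0 ≤ z.im})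
    (hMpdiff : ∀ i j, DifferentiableOn ℂ (fun z => Mp z i j) {z | 0 < z.im})
    (hMmcont : ContinuousOn Mm {z | z.im ≤ 0})
    (hMmdiff : ∀ i j, DifferentiableOn ℂ (fun z => Mm z i j) {z | z.im < 0})
    (hreal : ∀ x : ℝ, Mp x * (Mm x)ᴴ = Mm x * (Mp x)ᴴ)
    (hMplim : Tendsto Mp (cocompact ℂ ⊓ 𝓟 {z | 0 ≤ z.im}) (𝓝 1))
    (hMmlim : Tendsto Mm (cocompact ℂ ⊓ 𝓟 {z | z.im ≤ 0}) (𝓝 1))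
    {z : ℂ} (hz : 0 ≤ z.im) : Mp z * (Mm (conj z))ᴴ = 1 := by
  set H : ℂ → Matrix ι ι ℂ := fun w =>
    if 0 ≤ w.im then Mp w * (Mm (conj w))ᴴ else Mm w * (Mp (conj w))ᴴ with hH
  have hmaps_upper : MapsTo conj {w : ℂ | 0 ≤ w.im} {w | w.im ≤ 0} := fun w hw => by simpa using hw
  have hmaps_lower : MapsTo conj {w : ℂ | w.im ≤ 0} {w | 0 ≤ w.im} := fun w hw => by simpa using hw
  have hcont : Continuous H := by
    refine continuous_if_le continuous_const continuous_im
      (continuousOn_mul_conjTranspose_comp_conj hMpcont hMmcont hmaps_upper)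
      (continuousOn_mul_conjTranspose_comp_conj hMmcont hMpcont hmaps_lower) fun w hw => ?_
    obtain ⟨x, rfl⟩ : ∃ x : ℝ, (x : ℂ) = w := ⟨w.re, Complex.ext rfl hw⟩
    simpa using hreal x
  have hdiff (i j : ι) (w : ℂ) (hw : w.im ≠ 0) : DifferentiableAt ℂ (fun w => H w i j) w := by
    have hUo : IsOpen {v : ℂ | 0 < v.im} := isOpen_lt continuous_const continuous_im
    have hLo : IsOpen {v : ℂ | v.im < 0} := isOpen_lt continuous_im continuous_const
    rcases hw.lt_or_gt with hw | hw
    · refine (differentiableAt_mul_conjTranspose_comp_conj_apply hLo hUo hMmdiff hMpdiff hw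
        (by simpa using hw) i j).congr_of_eventuallyEq ?_
      filter_upwards [hLo.mem_nhds hw] with v hv
      simp [hH, not_le.2 hv]
    · refine (differentiableAt_mul_conjTranspose_comp_conj_apply hUo hLo hMpdiff hMmdiff hw
        (by simpa using hw) i j).congr_of_eventuallyEq ?_
      filter_upwards [hUo.mem_nhds hw] with v hv
      simp [hH, hv.le]
  have hlim : Tendsto H (cocompact ℂ) (𝓝 1) := by
    have hup := tendsto_mul_conjTranspose_comp_conj hMplim hMmlim hmaps_upper
    have hlow := tendsto_mul_conjTranspose_comp_conj hMmlim hMplim hmaps_lower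
    rw [conjTranspose_one, mul_one] at hup hlow
    exact hup.if <| hlow.mono_left <|
      inf_le_inf_left _ <| principal_mono.2 fun w hw => (not_le.1 hw).le
  ext i j
  have hij := (differentiable_of_differentiableAt_of_im_ne_zero (hcont.matrix_elem i j)
    (hdiff i j)).apply_eq_of_tendsto_cocompact z
    (((continuous_id.matrix_elem i j).tendsto 1).comp hlim)
  simpa [hH, hz] using hij

theorem rhp_hermitian_symmetry_general
    (V : ℝ → Matrix (Fin 3) (Fin 3) ℂ)
    (hVherm : ∀ x : ℝ, (V x)ᴴ = V x)
    (Mp Mm : ℂ → Matrix (Fin 3) (Fin 3) ℂ)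
    (hMpcont : ContinuousOn Mp {z : ℂ | 0 ≤ z.im})
    (hMpdiff : ∀ i j : Fin 3,
      DifferentiableOn ℂ (fun z => Mp z i j) {z : ℂ | 0 < z.im})
    (hMmcont : ContinuousOn Mm {z : ℂ | z.im ≤ 0})
    (hMmdiff : ∀ i j : Fin 3,
      DifferentiableOn ℂ (fun z => Mm z i j) {z : ℂ | z.im < 0})
    (hjump : ∀ x : ℝ, Mp (x : ℂ) = Mm (x : ℂ) * V x)
    (hMplim : Tendsto Mp
      (comap (fun z : ℂ => ‖z‖) atTop ⊓ principal {z : ℂ | 0 ≤ z.im}) (nhds 1))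
    (hMmlim : Tendsto Mm
      (comap (fun z : ℂ => ‖z‖) atTop ⊓ principal {z : ℂ | z.im ≤ 0}) (nhds 1)) :
    (∀ z : ℂ, 0 ≤ z.im → Mp z * (Mm (starRingEnd ℂ z))ᴴ = 1) ∧
    (∀ z : ℂ, z.im ≤ 0 → Mm z * (Mp (starRingEnd ℂ z))ᴴ = 1) := by
  rw [comap_norm_atTop, Metric.cobounded_eq_cocompact] at hMplim hMmlim
  have hreal (x : ℝ) : Mp x * (Mm x)ᴴ = Mm x * (Mp x)ᴴ := by
    rw [hjump, conjTranspose_mul, hVherm, Matrix.mul_assoc]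
  have hupper {z : ℂ} (hz : 0 ≤ z.im) : Mp z * (Mm (conj z))ᴴ = 1 :=
    mul_conjTranspose_comp_conj_eq_one hMpcont hMpdiff hMmcont hMmdiff hreal hMplim hMmlim hz
  refine ⟨fun z hz => hupper hz, fun z hz => ?_⟩
  simpa using congrArg conjTranspose (hupper (z := conj z) (by simpa using hz))

/-- Symmetry of the solution of the pole-free Riemann–Hilbert problem with
Hermitian jump matrix.  Let `V : ℝ → M₃(ℂ)` be continuous and pointwise
Hermitian.  Suppose `M₊` is continuous on the closed upper half-plane and
holomorphic (entrywise) on the open upper half-plane, `M₋` is continuous on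
the closed lower half-plane and holomorphic on the open lower half-plane,
`M₊(x) = M₋(x)·V(x)` on ℝ, and both tend to `I₃` as `|λ| → ∞` within their
half-planes.  Then `M₊(λ)·(M₋(conj λ))ᴴ = I₃` on the closed upper half-plane
and `M₋(λ)·(M₊(conj λ))ᴴ = I₃` on the closed lower half-plane. -/
theorem rhp_hermitian_symmetry
    (V : ℝ → Matrix (Fin 3) (Fin 3) ℂ)
    (hVcont : Continuous V)
    (hVherm : ∀ x : ℝ, (V x)ᴴ = V x)
    (Mp Mm : ℂ → Matrix (Fin 3) (Fin 3) ℂ)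
    (hMpcont : ContinuousOn Mp {z : ℂ | 0 ≤ z.im})
    (hMpdiff : ∀ i j : Fin 3,
      DifferentiableOn ℂ (fun z => Mp z i j) {z : ℂ | 0 < z.im})
    (hMmcont : ContinuousOn Mm {z : ℂ | z.im ≤ 0})
    (hMmdiff : ∀ i j : Fin 3,
      DifferentiableOn ℂ (fun z => Mm z i j) {z : ℂ | z.im < 0})
    (hjump : ∀ x : ℝ, Mp (x : ℂ) = Mm (x : ℂ) * V x)
    (hMplim : Tendsto Mp
      (comap (fun z : ℂ => ‖z‖) atTop ⊓ principal {z : ℂ | 0 ≤ z.im}) (nhds 1))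
    (hMmlim : Tendsto Mm
      (comap (fun z : ℂ => ‖z‖) atTop ⊓ principal {z : ℂ | z.im ≤ 0}) (nhds 1)) :
    (∀ z : ℂ, 0 ≤ z.im → Mp z * (Mm (starRingEnd ℂ z))ᴴ = 1) ∧
    (∀ z : ℂ, z.im ≤ 0 → Mm z * (Mp (starRingEnd ℂ z))ᴴ = 1) :=
  rhp_hermitian_symmetry_general V hVherm Mp Mm hMpcont hMpdiff hMmcont hMmdiff hjump hMplim hMmlim
end
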